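/- arXiv:1610.09474 — 3 statements merged into one kernel-verified Lean document; each statement's English description precedes it below -/
import Mathlib

section
/- Let k and s be natural numbers with k ≥ 2s and s ≥ 1. Then every polynomial of the form p₁·f_{k−s+1} + p₂·g_{k−s+1}, where p₁ and p₂ are homogeneous real polynomials of degree s−1 in x, y, lies in the kernel of Δ^s; that is, P_{s−1}·H_{k−s+1} ⊆ Ker(Δ^s : P_k → P_{k−2s}). -/
open MvPolynomial

/-- The Laplacian on polynomials in two variables. -/
noncomputable def pLap (p : MvPolynomial (Fin 2) ℝ) : MvPolynomial (Fin 2) ℝ :=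
  pderiv 0 (pderiv 0 p) + pderiv 1 (pderiv 1 p)

private lemma pderiv_comm' (i j : Fin 2) (p : MvPolynomial (Fin 2) ℝ) :
    pderiv i (pderiv j p) = pderiv j (pderiv i p) := by
  induction p using MvPolynomial.induction_on with
  | C a => simp
  | add p q hp hq => simp [hp, hq]
  | mul_X p k hp =>
      have d1 : pderiv i (pderiv j (X k : MvPolynomial (Fin 2) ℝ)) = 0 := by
        rcases eq_or_ne k j with rfl | h
        · rw [pderiv_X_self]; simp
        · rw [pderiv_X_of_ne h]; simp
      have d2 : pderiv j (pderiv i (X k : MvPolynomial (Fin 2) ℝ)) = 0 := by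
        rcases eq_or_ne k i with rfl | h
        · rw [pderiv_X_self]; simp
        · rw [pderiv_X_of_ne h]; simp
      simp only [pderiv_mul, map_add, d1, d2, hp]
      ring

private lemma pLap_pderiv (i : Fin 2) (p : MvPolynomial (Fin 2) ℝ) :
    pLap (pderiv i p) = pderiv i (pLap p) := by
  simp only [pLap, map_add]
  rw [pderiv_comm' 0 i p, pderiv_comm' 0 i (pderiv 0 p),
    pderiv_comm' 1 i p, pderiv_comm' 1 i (pderiv 1 p)]

private lemma pLap_add (p q : MvPolynomial (Fin 2) ℝ) :
    pLap (p + q) = pLap p + pLap q := by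
  simp only [pLap, map_add]; ring

private lemma pLap_iter_add (n : ℕ) (p q : MvPolynomial (Fin 2) ℝ) :
    pLap^[n] (p + q) = pLap^[n] p + pLap^[n] q := by
  induction n generalizing p q with
  | zero => rfl
  | succ n ih => rw [Function.iterate_succ_apply, Function.iterate_succ_apply,
      Function.iterate_succ_apply, pLap_add, ih]

private lemma pLap_zero : pLap 0 = 0 := by simp [pLap]

private lemma pLap_iter_zero (n : ℕ) : pLap^[n] 0 = 0 :=
  Function.iterate_fixed pLap_zero n

private lemma totalDegree_pderiv_le (i : Fin 2) (p : MvPolynomial (Fin 2) ℝ) {d : ℕ}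
    (h : p.totalDegree ≤ d + 1) : (pderiv i p).totalDegree ≤ d := by
  classical
  rw [p.as_sum, map_sum]
  refine (totalDegree_finset_sum _ _).trans (Finset.sup_le fun m hm => ?_)
  rw [pderiv_monomial]
  by_cases hmi : m i = 0
  · simp [hmi]
  · refine (totalDegree_monomial_le _ _).trans ?_
    simp only [Function.id_def]
    have hle : Finsupp.single i 1 ≤ m := by
      rw [Finsupp.single_le_iff]; omega
    have hms : m.sum (fun _ e => e) ≤ d + 1 := le_trans (le_totalDegree hm) h
    have key : (m - Finsupp.single i 1).sum (fun _ e => e) + 1 = m.sum (fun _ e => e) := by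
      have : (m - Finsupp.single i 1) + Finsupp.single i 1 = m :=
        tsub_add_cancel_of_le hle
      calc (m - Finsupp.single i 1).sum (fun _ e => e) + 1
          = (m - Finsupp.single i 1).sum (fun _ e => e)
            + (Finsupp.single i 1).sum (fun _ e => e) := by
            rw [Finsupp.sum_single_index]; rfl
        _ = ((m - Finsupp.single i 1) + Finsupp.single i 1).sum (fun _ e => e) := by
            rw [Finsupp.sum_add_index' (fun _ => rfl) (fun _ _ _ => rfl)]
        _ = m.sum (fun _ e => e) := by rw [this]
    omega

private lemma totalDegree_pderiv_le' (i : Fin 2) (p : MvPolynomial (Fin 2) ℝ) :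
    (pderiv i p).totalDegree ≤ p.totalDegree := by
  rcases Nat.eq_zero_or_pos p.totalDegree with h | hpos
  · have : ∀ j, j ∈ p.vars → False := by
      intro j hj
      rw [mem_vars] at hj
      obtain ⟨m, hm, hjm⟩ := hj
      rw [totalDegree_eq_zero_iff] at h
      exact absurd (h m hm j) (Finsupp.mem_support_iff.mp hjm)
    rw [pderiv_eq_zero_of_notMem_vars (fun hi => this i hi)]
    simp
  · obtain ⟨e, he⟩ : ∃ e, p.totalDegree = e + 1 := ⟨p.totalDegree - 1, by omega⟩
    rw [he]
    exact le_trans (totalDegree_pderiv_le i p he.le) (Nat.le_succ e)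

private lemma pLap_mul (p h : MvPolynomial (Fin 2) ℝ) :
    pLap (p * h) = (pLap p) * h
      + ((2 : MvPolynomial (Fin 2) ℝ) * pderiv 0 p) * pderiv 0 h
      + ((2 : MvPolynomial (Fin 2) ℝ) * pderiv 1 p) * pderiv 1 h
      + p * pLap h := by
  simp only [pLap, pderiv_mul, map_add]
  ring

private lemma key_lemma : ∀ (d : ℕ) (p h : MvPolynomial (Fin 2) ℝ),
    p.totalDegree ≤ d → pLap h = 0 → pLap^[d + 1] (p * h) = 0 := by
  intro d
  induction d with
  | zero =>
      intro p h hp hh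
      have hd0 : ∀ i : Fin 2, pderiv i p = 0 := by
        intro i
        apply pderiv_eq_zero_of_notMem_vars
        intro hi
        rw [mem_vars] at hi
        obtain ⟨m, hm, him⟩ := hi
        have h0 : p.totalDegree = 0 := Nat.le_zero.mp hp
        rw [totalDegree_eq_zero_iff] at h0
        exact absurd (h0 m hm i) (Finsupp.mem_support_iff.mp him)
      rw [Function.iterate_one, pLap_mul, hh]
      simp [pLap, hd0]
  | succ d ih =>
      intro p h hp hh
      rw [Function.iterate_succ_apply, pLap_mul, hh, mul_zero, add_zero,
        pLap_iter_add, pLap_iter_add]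
      have h1 : pLap^[d + 1] (pLap p * h) = 0 := by
        apply ih _ _ _ hh
        have b0 : (pderiv 0 (pderiv 0 p)).totalDegree ≤ d :=
          le_trans (totalDegree_pderiv_le' _ _) (totalDegree_pderiv_le 0 p hp)
        have b1 : (pderiv 1 (pderiv 1 p)).totalDegree ≤ d :=
          le_trans (totalDegree_pderiv_le' _ _) (totalDegree_pderiv_le 1 p hp)
        exact le_trans (totalDegree_add _ _) (max_le b0 b1)
      have hharm : ∀ i : Fin 2, pLap (pderiv i h) = 0 := by
        intro i; rw [pLap_pderiv, hh]; simp
      have h2 : ∀ i : Fin 2,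
          pLap^[d + 1] (((2 : MvPolynomial (Fin 2) ℝ) * pderiv i p) * pderiv i h) = 0 := by
        intro i
        apply ih _ _ _ (hharm i)
        calc ((2 : MvPolynomial (Fin 2) ℝ) * pderiv i p).totalDegree
            ≤ (2 : MvPolynomial (Fin 2) ℝ).totalDegree + (pderiv i p).totalDegree :=
              totalDegree_mul _ _
          _ ≤ 0 + d := by
              gcongr
              · exact le_of_eq (by
                  rw [show (2 : MvPolynomial (Fin 2) ℝ) = C (2 : ℝ) from (map_ofNat C 2).symm]
                  exact totalDegree_C _)
              · exact totalDegree_pderiv_le i p hp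
          _ = d := by omega
      rw [h1, h2 0, h2 1]
      simp

/-- The polynomials `Re((x+iy)^n)` and `Im((x+iy)^n)`. -/
private noncomputable def FG : ℕ → MvPolynomial (Fin 2) ℝ × MvPolynomial (Fin 2) ℝ
  | 0 => (1, 0)
  | n + 1 => (X 0 * (FG n).1 - X 1 * (FG n).2, X 0 * (FG n).2 + X 1 * (FG n).1)

private lemma pd01 : pderiv (0 : Fin 2) (X 1 : MvPolynomial (Fin 2) ℝ) = 0 :=
  pderiv_X_of_ne (by decide)

private lemma pd10 : pderiv (1 : Fin 2) (X 0 : MvPolynomial (Fin 2) ℝ) = 0 :=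
  pderiv_X_of_ne (by decide)

private lemma FG_CR (n : ℕ) :
    pderiv 0 (FG n).1 = pderiv 1 (FG n).2 ∧ pderiv 1 (FG n).1 = -pderiv 0 (FG n).2 := by
  induction n with
  | zero => simp [FG]
  | succ n ih =>
      simp only [FG, map_add, map_sub, pderiv_mul, pderiv_X_self, pd01, pd10,
        ih.1, ih.2]
      constructor <;> ring

private lemma FG_harmonic (n : ℕ) : pLap (FG n).1 = 0 ∧ pLap (FG n).2 = 0 := by
  induction n with
  | zero => simp [FG, pLap]
  | succ n ih =>
      have cr := FG_CR n
      have h1 := ih.1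
      have h2 := ih.2
      simp only [pLap] at h1 h2
      constructor
      · show pLap (X 0 * (FG n).1 - X 1 * (FG n).2) = 0
        simp only [pLap, map_sub, map_add, pderiv_mul, pderiv_X_self, pd01, pd10,
          pderiv_one, map_zero, map_one]
        linear_combination (X 0 : MvPolynomial (Fin 2) ℝ) * h1
          - (X 1 : MvPolynomial (Fin 2) ℝ) * h2 + 2 * cr.1
      · show pLap (X 0 * (FG n).2 + X 1 * (FG n).1) = 0
        simp only [pLap, map_sub, map_add, pderiv_mul, pderiv_X_self, pd01, pd10,
          pderiv_one, map_zero, map_one]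
        linear_combination (X 0 : MvPolynomial (Fin 2) ℝ) * h2
          + (X 1 : MvPolynomial (Fin 2) ℝ) * h1 + 2 * cr.2

private lemma FG_eval (n : ℕ) (x y : ℝ) :
    eval ![x, y] (FG n).1 = (((x : ℂ) + y * Complex.I) ^ n).re ∧
    eval ![x, y] (FG n).2 = (((x : ℂ) + y * Complex.I) ^ n).im := by
  induction n with
  | zero => simp [FG]
  | succ n ih =>
      have hz : (((x : ℂ) + y * Complex.I) ^ (n + 1))
          = ((x : ℂ) + y * Complex.I) ^ n * ((x : ℂ) + y * Complex.I) := pow_succ _ _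
      constructor
      · show eval ![x, y] (X 0 * (FG n).1 - X 1 * (FG n).2) = _
        simp only [map_sub, map_mul, eval_X, Matrix.cons_val_zero, Matrix.cons_val_one,
          Matrix.head_cons, ih.1, ih.2, hz, Complex.mul_re, Complex.add_re, Complex.add_im,
          Complex.ofReal_re, Complex.ofReal_im, Complex.mul_im, Complex.I_re, Complex.I_im]
        ring
      · show eval ![x, y] (X 0 * (FG n).2 + X 1 * (FG n).1) = _
        simp only [map_add, map_mul, eval_X, Matrix.cons_val_zero, Matrix.cons_val_one,
          Matrix.head_cons, ih.1, ih.2, hz, Complex.mul_re, Complex.add_re, Complex.add_im,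
          Complex.ofReal_re, Complex.ofReal_im, Complex.mul_im, Complex.I_re, Complex.I_im]
        ring

/-- For `k ≥ 2s`, `s ≥ 1`, and `p₁, p₂` homogeneous of degree `s−1`,
the polynomial `p₁·f_{k−s+1} + p₂·g_{k−s+1}` lies in the kernel of `Δ^s`,
where `f n = Re((x+iy)^n)` and `g n = Im((x+iy)^n)`. -/
theorem polyharmonic_kernel_contains
    (f g : ℕ → MvPolynomial (Fin 2) ℝ)
    (hf : ∀ (n : ℕ) (x y : ℝ), eval ![x, y] (f n) = (((x : ℂ) + y * Complex.I) ^ n).re)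
    (hg : ∀ (n : ℕ) (x y : ℝ), eval ![x, y] (g n) = (((x : ℂ) + y * Complex.I) ^ n).im)
    (k s : ℕ) (hs : 1 ≤ s) (hks : 2 * s ≤ k)
    (p₁ p₂ : MvPolynomial (Fin 2) ℝ)
    (hp₁ : p₁.IsHomogeneous (s - 1)) (hp₂ : p₂.IsHomogeneous (s - 1)) :
    pLap^[s] (p₁ * f (k - s + 1) + p₂ * g (k - s + 1)) = 0 := by
  set n := k - s + 1
  have hfe : f n = (FG n).1 := by
    apply MvPolynomial.funext
    intro v
    have hv : v = ![v 0, v 1] := by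
      funext i; fin_cases i <;> simp
    rw [hv, hf n (v 0) (v 1), (FG_eval n (v 0) (v 1)).1]
  have hge : g n = (FG n).2 := by
    apply MvPolynomial.funext
    intro v
    have hv : v = ![v 0, v 1] := by
      funext i; fin_cases i <;> simp
    rw [hv, hg n (v 0) (v 1), (FG_eval n (v 0) (v 1)).2]
  have hs' : s = (s - 1) + 1 := by omega
  rw [hfe, hge, hs', pLap_iter_add,
    key_lemma (s - 1) p₁ (FG n).1 hp₁.totalDegree_le (FG_harmonic n).1,
    key_lemma (s - 1) p₂ (FG n).2 hp₂.totalDegree_le (FG_harmonic n).2,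
    add_zero]
end

section
/- Let k ≥ 1 be a natural number and s ≥ 0 an integer. If s < k−1, then P_s·H_k = {p ∈ P_{s+k} : Δ^{s+1} p = 0}, i.e. P_s·H_k equals the kernel of Δ^{s+1} on homogeneous polynomials of degree s+k. If s ≥ k−1, then P_s·H_k = P_{s+k}. -/
/-!
In complex coordinates `z = x + i y`, `P_n` has the basis `z ^ a * conj z ^ b` with `a + b = n`,
and `Δ = 4 ∂_z ∂_(conj z)`. Both `P_s · H_k` and the kernel of `Δ ^ (s + 1)` on `P_(s+k)` are
spanned by the basis vectors with `min a b ≤ s`; over `ℝ`, by the `r ^ (2 i) * h` with `i ≤ s` and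
`h` harmonic of degree `s + k - 2 i`.

That `P_s · H_k` is killed by `Δ ^ (s + 1)` follows from `Δ (p h) = Δ p * h + 2 ∇p ⬝ ∇h` for
harmonic `h`, by induction on the degree of `p`. Conversely,
`Δ (r ^ (2 i + 2) * h) = 4 (i + 1) (i + 1 + j) r ^ (2 i) * h` for `h` harmonic of degree `j`, so
`Δ` maps the span for `(i ≤ s + 1, degree n + 2)` onto the one for `(i ≤ s, degree n)`, and
induction on `s` puts the kernel into the span. Since a harmonic polynomial of degree `j` is a
combination of `Re z ^ j` and `Im z ^ j`, the identity
`r ^ (2 i) z ^ j = z ^ k * (z ^ m * conj z ^ i)` (`m + i = s`) puts the span into `P_s · H_k`.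
When `k ≤ s + 1`, `Δ ^ (s + 1)` vanishes on `P_(s+k)` for degree reasons.
-/

open MvPolynomial

theorem MvPolynomial.pderiv_pderiv_comm {R σ : Type*} [CommRing R] (i j : σ)
    (p : MvPolynomial σ R) : pderiv i (pderiv j p) = pderiv j (pderiv i p) := by
  have hcomm : ⁅pderiv i, pderiv j⁆ = (0 : Derivation R (MvPolynomial σ R) _) :=
    derivation_ext fun k => by
      classical
      rw [Derivation.commutator_apply]
      simp [pderiv_X, Pi.single_apply, apply_ite]
  rw [← sub_eq_zero, ← Derivation.commutator_apply, hcomm, Derivation.zero_apply]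

theorem MvPolynomial.IsHomogeneous.pderiv_eq_zero {R σ : Type*} [CommSemiring R]
    {p : MvPolynomial σ R} (hp : p.IsHomogeneous 0) (i : σ) : pderiv i p = 0 := by
  rw [← totalDegree_zero_iff_isHomogeneous, totalDegree_eq_zero_iff_eq_C] at hp
  rw [hp, pderiv_C]

theorem MvPolynomial.funext_fin_two {R : Type*} [CommRing R] [IsDomain R] [Infinite R]
    {p q : MvPolynomial (Fin 2) R} (h : ∀ x y : R, eval ![x, y] p = eval ![x, y] q) : p = q := by
  refine MvPolynomial.funext fun v => ?_
  rw [show v = ![v 0, v 1] by ext i; fin_cases i <;> rfl]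
  exact h _ _

noncomputable def lapₗ : Module.End ℝ (MvPolynomial (Fin 2) ℝ) :=
  (pderiv 0).toLinearMap ∘ₗ (pderiv 0).toLinearMap +
    (pderiv 1).toLinearMap ∘ₗ (pderiv 1).toLinearMap

section Laplacian

variable {p q : MvPolynomial (Fin 2) ℝ} {n : ℕ}

theorem lapₗ_apply (p : MvPolynomial (Fin 2) ℝ) : lapₗ p = pLap p := rfl

theorem coe_lapₗ_pow (t : ℕ) : ⇑(lapₗ ^ t) = pLap^[t] := Module.End.coe_pow _ _

theorem lapₗ_mul (p q : MvPolynomial (Fin 2) ℝ) :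
    lapₗ (p * q) = lapₗ p * q + p * lapₗ q
      + 2 * (pderiv 0 p * pderiv 0 q + pderiv 1 p * pderiv 1 q) := by
  simp only [lapₗ_apply, pLap, map_add, pderiv_mul]
  ring

theorem lapₗ_pderiv (i : Fin 2) (p : MvPolynomial (Fin 2) ℝ) :
    lapₗ (pderiv i p) = pderiv i (lapₗ p) := by
  simp only [lapₗ_apply, pLap, map_add]
  rw [pderiv_pderiv_comm 0 i, pderiv_pderiv_comm 0 i (pderiv 0 p),
    pderiv_pderiv_comm 1 i, pderiv_pderiv_comm 1 i (pderiv 1 p)]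

theorem isHomogeneous_lapₗ (hp : p.IsHomogeneous n) :
    (lapₗ p).IsHomogeneous (n - 2) := by
  rw [show n - 2 = n - 1 - 1 by omega]
  exact hp.pderiv.pderiv.add hp.pderiv.pderiv

theorem MvPolynomial.IsHomogeneous.lapₗ_eq_zero (hp : p.IsHomogeneous n) (hn : n < 2) :
    lapₗ p = 0 := by
  have hp' (i : Fin 2) : (pderiv i p).IsHomogeneous 0 := by
    simpa [Nat.sub_eq_zero_of_le (by omega : n ≤ 1)] using hp.pderiv
  rw [lapₗ_apply, pLap, (hp' 0).pderiv_eq_zero, (hp' 1).pderiv_eq_zero, add_zero]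

theorem MvPolynomial.IsHomogeneous.lapₗ_pow_eq_zero {t : ℕ} (hp : p.IsHomogeneous n)
    (hn : n < 2 * t) : (lapₗ ^ t) p = 0 := by
  induction t generalizing n p with
  | zero => omega
  | succ t ih =>
    rw [pow_succ, Module.End.mul_apply]
    rcases lt_or_ge n 2 with hn2 | hn2
    · rw [hp.lapₗ_eq_zero hn2, map_zero]
    · exact ih (isHomogeneous_lapₗ hp) (by omega)

theorem lapₗ_pow_mul_eq_zero (hp : p.IsHomogeneous n) (hq : lapₗ q = 0) :
    (lapₗ ^ (n + 1)) (p * q) = 0 := by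
  induction n using Nat.strong_induction_on generalizing p q with
  | _ n ih =>
  have hlap : (lapₗ ^ n) (lapₗ p * q) = 0 := by
    rcases lt_or_ge n 2 with hn | hn
    · rw [hp.lapₗ_eq_zero hn, zero_mul, map_zero]
    · exact Module.End.pow_map_zero_of_le (by omega)
        (ih (n - 2) (by omega) (isHomogeneous_lapₗ hp) hq)
  have hderiv (i : Fin 2) : (lapₗ ^ n) (pderiv i p * pderiv i q) = 0 := by
    rcases Nat.eq_zero_or_pos n with rfl | hn
    · rw [hp.pderiv_eq_zero, zero_mul, map_zero]
    · refine Module.End.pow_map_zero_of_le (by omega) (ih (n - 1) (by omega) hp.pderiv ?_)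
      rw [lapₗ_pderiv, hq, map_zero]
  rw [pow_succ, Module.End.mul_apply, lapₗ_mul, hq, mul_zero, add_zero, two_mul]
  simp only [map_add, hlap, hderiv, add_zero]

end Laplacian

/-- `(Re, Im)` of `(X 0 + i X 1) ^ n`, computed by `z ^ (n + 1) = z * z ^ n`. -/
noncomputable def reImPow : ℕ → MvPolynomial (Fin 2) ℝ × MvPolynomial (Fin 2) ℝ
  | 0 => (1, 0)
  | n + 1 =>
    (X 0 * (reImPow n).1 - X 1 * (reImPow n).2, X 0 * (reImPow n).2 + X 1 * (reImPow n).1)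

noncomputable def rePow (n : ℕ) : MvPolynomial (Fin 2) ℝ := (reImPow n).1

noncomputable def imPow (n : ℕ) : MvPolynomial (Fin 2) ℝ := (reImPow n).2

noncomputable def rSq : MvPolynomial (Fin 2) ℝ := X 0 ^ 2 + X 1 ^ 2

section Powers

@[simp] theorem rePow_zero : rePow 0 = 1 := rfl

@[simp] theorem imPow_zero : imPow 0 = 0 := rfl

theorem rePow_succ (n : ℕ) : rePow (n + 1) = X 0 * rePow n - X 1 * imPow n := rfl

theorem imPow_succ (n : ℕ) : imPow (n + 1) = X 0 * imPow n + X 1 * rePow n := rfl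

theorem eval_rePow_add_eval_imPow_mul_I (n : ℕ) (x y : ℝ) :
    (eval ![x, y] (rePow n) : ℂ) + eval ![x, y] (imPow n) * Complex.I =
      (x + y * Complex.I) ^ n := by
  induction n with
  | zero => simp
  | succ n ih =>
    rw [pow_succ, ← ih, rePow_succ, imPow_succ]
    simp only [map_sub, map_add, map_mul, eval_X, Matrix.cons_val_zero, Matrix.cons_val_one,
      Complex.ofReal_sub, Complex.ofReal_add, Complex.ofReal_mul]
    linear_combination (-(↑(eval ![x, y] (imPow n)) * y)) * Complex.I_sq

theorem isHomogeneous_rePow_imPow (n : ℕ) :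
    (rePow n).IsHomogeneous n ∧ (imPow n).IsHomogeneous n := by
  induction n with
  | zero => exact ⟨isHomogeneous_one _ _, isHomogeneous_zero _ _ _⟩
  | succ n ih =>
    rw [rePow_succ, imPow_succ, add_comm n 1]
    have hX (i : Fin 2) := isHomogeneous_X ℝ i
    exact ⟨((hX 0).mul ih.1).sub ((hX 1).mul ih.2), ((hX 0).mul ih.2).add ((hX 1).mul ih.1)⟩

theorem pderiv_rePow_imPow_cauchyRiemann (n : ℕ) :
    pderiv 0 (rePow n) = pderiv 1 (imPow n) ∧ pderiv 1 (rePow n) = -pderiv 0 (imPow n) := by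
  induction n with
  | zero => simp
  | succ n ih =>
    simp only [rePow_succ, imPow_succ, map_sub, map_add, pderiv_mul, pderiv_X_self,
      pderiv_X_of_ne (show (1 : Fin 2) ≠ 0 by decide),
      pderiv_X_of_ne (show (0 : Fin 2) ≠ 1 by decide)]
    constructor
    · linear_combination X 0 * ih.1 - X 1 * ih.2
    · linear_combination X 0 * ih.2 + X 1 * ih.1

theorem lapₗ_rePow (n : ℕ) : lapₗ (rePow n) = 0 := by
  obtain ⟨h0, h1⟩ := pderiv_rePow_imPow_cauchyRiemann n
  rw [lapₗ_apply, pLap, h0, h1, map_neg, pderiv_pderiv_comm, add_neg_cancel]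

theorem lapₗ_imPow (n : ℕ) : lapₗ (imPow n) = 0 := by
  obtain ⟨h0, h1⟩ := pderiv_rePow_imPow_cauchyRiemann n
  have h1' : pderiv 0 (imPow n) = -pderiv 1 (rePow n) := by rw [h1, neg_neg]
  rw [lapₗ_apply, pLap, h1', ← h0, map_neg, pderiv_pderiv_comm, neg_add_cancel]

theorem pderiv_zero_rePow_imPow_succ (n : ℕ) :
    pderiv 0 (rePow (n + 1)) = ((n : ℝ) + 1) • rePow n ∧
      pderiv 0 (imPow (n + 1)) = ((n : ℝ) + 1) • imPow n := by
  induction n with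
  | zero => simp [rePow_succ, imPow_succ, pderiv_X_of_ne (show (1 : Fin 2) ≠ 0 by decide)]
  | succ n ih =>
    simp only [rePow_succ (n + 1), imPow_succ (n + 1), map_sub, map_add, pderiv_mul,
      pderiv_X_self, pderiv_X_of_ne (show (1 : Fin 2) ≠ 0 by decide), ih.1, ih.2, mul_smul_comm,
      one_mul, zero_mul, zero_add]
    rw [rePow_succ, imPow_succ]
    push_cast
    constructor <;> module

theorem rePow_imPow_add (m n : ℕ) :
    rePow (m + n) = rePow m * rePow n - imPow m * imPow n ∧
      imPow (m + n) = imPow m * rePow n + rePow m * imPow n := by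
  induction n with
  | zero => simp
  | succ n ih =>
    rw [← add_assoc, rePow_succ, imPow_succ, rePow_succ, imPow_succ, ih.1, ih.2]
    constructor <;> ring

theorem rePow_sq_add_imPow_sq (n : ℕ) : rePow n ^ 2 + imPow n ^ 2 = rSq ^ n := by
  induction n with
  | zero => simp
  | succ n ih =>
    rw [rePow_succ, imPow_succ, pow_succ rSq, ← ih, rSq]
    ring

theorem rSq_pow_mul_rePow (c i : ℕ) :
    rSq ^ i * rePow c = rePow (c + i) * rePow i + imPow (c + i) * imPow i := by
  rw [(rePow_imPow_add c i).1, (rePow_imPow_add c i).2, ← rePow_sq_add_imPow_sq]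
  ring

theorem rSq_pow_mul_imPow (c i : ℕ) :
    rSq ^ i * imPow c = imPow (c + i) * rePow i - rePow (c + i) * imPow i := by
  rw [(rePow_imPow_add c i).1, (rePow_imPow_add c i).2, ← rePow_sq_add_imPow_sq]
  ring

theorem eval_rePow (n : ℕ) (x y : ℝ) :
    eval ![x, y] (rePow n) = (((x : ℂ) + y * Complex.I) ^ n).re := by
  rw [← eval_rePow_add_eval_imPow_mul_I]
  simp

theorem eval_imPow (n : ℕ) (x y : ℝ) :
    eval ![x, y] (imPow n) = (((x : ℂ) + y * Complex.I) ^ n).im := by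
  rw [← eval_rePow_add_eval_imPow_mul_I]
  simp

end Powers

noncomputable def harmonicSubmodule (n : ℕ) : Submodule ℝ (MvPolynomial (Fin 2) ℝ) :=
  homogeneousSubmodule (Fin 2) ℝ n ⊓ LinearMap.ker lapₗ

section Harmonic

open Submodule

variable {p : MvPolynomial (Fin 2) ℝ} {n : ℕ}

theorem mem_harmonicSubmodule : p ∈ harmonicSubmodule n ↔ p.IsHomogeneous n ∧ lapₗ p = 0 :=
  Iff.rfl

theorem exists_eq_smul_X_one_pow (hp : p.IsHomogeneous n) (h0 : pderiv 0 p = 0) :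
    ∃ c : ℝ, p = c • X 1 ^ n := by
  induction n generalizing p with
  | zero =>
    rw [← totalDegree_zero_iff_isHomogeneous, totalDegree_eq_zero_iff_eq_C] at hp
    exact ⟨coeff 0 p, by rw [pow_zero, smul_eq_C_mul, mul_one, ← hp]⟩
  | succ n ih =>
    obtain ⟨c, hc⟩ := ih (by simpa using hp.pderiv (i := 1))
      (by rw [pderiv_pderiv_comm, h0, map_zero])
    have heuler := hp.sum_X_mul_pderiv
    rw [Fin.sum_univ_two, h0, hc, mul_zero, zero_add, mul_smul_comm, ← pow_succ',
      ← Nat.cast_smul_eq_nsmul ℝ] at heuler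
    refine ⟨c / (n + 1), ?_⟩
    rw [div_eq_inv_mul, mul_smul, heuler, smul_smul, Nat.cast_succ,
      inv_mul_cancel₀ (by positivity), one_smul]

theorem span_le_harmonicSubmodule (n : ℕ) :
    span ℝ {rePow n, imPow n} ≤ harmonicSubmodule n := by
  rw [span_le, Set.insert_subset_iff, Set.singleton_subset_iff]
  exact ⟨⟨(isHomogeneous_rePow_imPow n).1, lapₗ_rePow n⟩,
    ⟨(isHomogeneous_rePow_imPow n).2, lapₗ_imPow n⟩⟩

theorem lapₗ_X_one_pow (n : ℕ) :
    lapₗ (X 1 ^ (n + 2)) = (((n : ℝ) + 2) * (n + 1)) • X 1 ^ n := by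
  have hderiv (k : ℕ) :
      pderiv 1 (X 1 ^ (k + 1) : MvPolynomial (Fin 2) ℝ) = ((k : ℝ) + 1) • X 1 ^ k := by
    rw [pderiv_pow, pderiv_X_self, mul_one, Nat.add_sub_cancel, smul_eq_C_mul]
    norm_num
  have hzero : pderiv 0 (X 1 ^ (n + 2) : MvPolynomial (Fin 2) ℝ) = 0 := by
    rw [pderiv_pow, pderiv_X_of_ne (show (1 : Fin 2) ≠ 0 by decide), mul_zero]
  rw [lapₗ_apply, pLap, hzero, map_zero, zero_add, hderiv, Derivation.map_smul, hderiv,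
    smul_smul]
  congr 1
  push_cast
  ring

theorem harmonicSubmodule_eq_span (n : ℕ) :
    harmonicSubmodule n = span ℝ {rePow n, imPow n} := by
  refine le_antisymm (fun p hp => ?_) (span_le_harmonicSubmodule n)
  induction n generalizing p with
  | zero =>
    have hC := hp.1
    rw [SetLike.mem_coe, mem_homogeneousSubmodule, ← totalDegree_zero_iff_isHomogeneous,
      totalDegree_eq_zero_iff_eq_C] at hC
    exact mem_span_pair.2 ⟨coeff 0 p, 0, by rw [hC]; simp [smul_eq_C_mul]⟩
  | succ m ih =>
    obtain ⟨hp, hΔ⟩ := mem_harmonicSubmodule.1 hp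
    obtain ⟨a, b, hab⟩ := mem_span_pair.1 <| ih (pderiv 0 p) <|
      mem_harmonicSubmodule.2 ⟨by simpa using hp.pderiv, by rw [lapₗ_pderiv, hΔ, map_zero]⟩
    set q := ((m : ℝ) + 1)⁻¹ • (a • rePow (m + 1) + b • imPow (m + 1))
    have hq : q ∈ span ℝ {rePow (m + 1), imPow (m + 1)} :=
      smul_mem _ _ (mem_span_pair.2 ⟨a, b, rfl⟩)
    obtain ⟨hq_hom, hq_lap⟩ := mem_harmonicSubmodule.1 (span_le_harmonicSubmodule _ hq)
    have hdq : pderiv 0 q = pderiv 0 p := by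
      rw [← hab, Derivation.map_smul, map_add, Derivation.map_smul, Derivation.map_smul,
        (pderiv_zero_rePow_imPow_succ m).1, (pderiv_zero_rePow_imPow_succ m).2, smul_comm a,
        smul_comm b, ← smul_add, smul_smul, inv_mul_cancel₀ (by positivity), one_smul]
    -- `p - q` is then a multiple of `X 1 ^ (m + 1)`, which is harmonic only for `m = 0`.
    obtain ⟨c, hc⟩ := exists_eq_smul_X_one_pow (hp.sub hq_hom) (by rw [map_sub, hdq, sub_self])
    rw [show p = q + c • X 1 ^ (m + 1) by rw [← hc]; abel]
    refine add_mem hq ?_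
    rcases m with _ | m
    · exact smul_mem _ _ (subset_span (by simp [imPow_succ]))
    · have hcX : c • lapₗ (X 1 ^ (m + 2)) = 0 := by
        rw [← map_smul, ← hc, map_sub, hΔ, hq_lap, sub_zero]
      rw [lapₗ_X_one_pow, smul_smul, smul_eq_zero] at hcX
      have hc0 : c = 0 := by
        rcases hcX with h | h
        · simpa [Nat.cast_add_one_ne_zero, (by positivity : (m : ℝ) + 2 ≠ 0)] using h
        · exact absurd h (pow_ne_zero _ (X_ne_zero _))
      rw [hc0, zero_smul]
      exact zero_mem _

end Harmonic

/-- In complex coordinates, the span of the `z ^ a * conj z ^ b` with `a + b = n` and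
`min a b ≤ t`. -/
noncomputable def fischerSpan (t n : ℕ) : Submodule ℝ (MvPolynomial (Fin 2) ℝ) :=
  Submodule.span ℝ
    {q | ∃ i j, i ≤ t ∧ 2 * i + j = n ∧ ∃ h ∈ harmonicSubmodule j, q = rSq ^ i * h}

section Fischer

open Submodule

variable {p h : MvPolynomial (Fin 2) ℝ} {t n : ℕ}

theorem harmonicSubmodule_le_fischerSpan : harmonicSubmodule n ≤ fischerSpan t n :=
  fun h hh => subset_span ⟨0, n, Nat.zero_le t, by ring, h, hh, by rw [pow_zero, one_mul]⟩

theorem isHomogeneous_rSq : rSq.IsHomogeneous 2 :=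
  ((isHomogeneous_X ℝ 0).pow 2).add ((isHomogeneous_X ℝ 1).pow 2)

theorem fischerSpan_le_homogeneousSubmodule :
    fischerSpan t n ≤ homogeneousSubmodule (Fin 2) ℝ n := by
  rw [fischerSpan, span_le]
  rintro _ ⟨i, j, -, rfl, h, hh, rfl⟩
  exact (isHomogeneous_rSq.pow i).mul hh.1

theorem lapₗ_rSq_mul (hp : p.IsHomogeneous n) :
    lapₗ (rSq * p) = (4 * ((n : ℝ) + 1)) • p + rSq * lapₗ p := by
  have heuler := hp.sum_X_mul_pderiv
  rw [Fin.sum_univ_two, nsmul_eq_mul] at heuler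
  have hX (i : Fin 2) : pderiv i rSq = C 2 * X i := by
    fin_cases i <;> simp [rSq, pderiv_X, mul_comm, ← map_ofNat C]
  have hlap : lapₗ rSq = 4 := by
    rw [lapₗ_apply, pLap, hX, hX, pderiv_C_mul, pderiv_C_mul, pderiv_X_self, pderiv_X_self,
      mul_one, ← map_add, ← map_ofNat C 4]
    norm_num
  rw [lapₗ_mul, hlap, hX, hX, smul_eq_C_mul]
  simp only [map_mul, map_add, map_natCast, map_one, map_ofNat]
  linear_combination 4 * heuler

theorem lapₗ_rSq_pow_succ_mul (hh : h ∈ harmonicSubmodule n) (i : ℕ) :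
    lapₗ (rSq ^ (i + 1) * h) = (4 * ((i : ℝ) + 1) * (i + 1 + n)) • (rSq ^ i * h) := by
  induction i with
  | zero =>
    rw [zero_add, pow_one, pow_zero, one_mul, lapₗ_rSq_mul hh.1, hh.2, mul_zero, add_zero]
    congr 1
    push_cast
    ring
  | succ i ih =>
    rw [pow_succ' _ (i + 1), mul_assoc, lapₗ_rSq_mul ((isHomogeneous_rSq.pow _).mul hh.1), ih,
      mul_smul_comm, ← mul_assoc, ← pow_succ', ← add_smul]
    congr 1
    push_cast
    ring

theorem fischerSpan_le_map_lapₗ :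
    fischerSpan t n ≤ (fischerSpan (t + 1) (n + 2)).map lapₗ := by
  rw [fischerSpan, span_le]
  rintro _ ⟨i, j, hi, rfl, h, hh, rfl⟩
  have hc : 4 * ((i : ℝ) + 1) * (i + 1 + j) ≠ 0 := by positivity
  refine ⟨(4 * ((i : ℝ) + 1) * (i + 1 + j))⁻¹ • (rSq ^ (i + 1) * h),
    smul_mem _ _ (subset_span ⟨i + 1, j, by omega, by ring, h, hh, rfl⟩), ?_⟩
  rw [map_smul, lapₗ_rSq_pow_succ_mul hh, smul_smul, inv_mul_cancel₀ hc, one_smul]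

theorem mem_fischerSpan_of_lapₗ_pow_eq_zero (hp : p.IsHomogeneous n)
    (hker : (lapₗ ^ (t + 1)) p = 0) : p ∈ fischerSpan t n := by
  induction t generalizing n p with
  | zero => exact harmonicSubmodule_le_fischerSpan ⟨hp, by simpa using hker⟩
  | succ t ih =>
    obtain ⟨p', hp', hlap⟩ : ∃ p' ∈ fischerSpan (t + 1) n, lapₗ p' = lapₗ p := by
      rcases lt_or_ge n 2 with hn | hn
      · exact ⟨0, zero_mem _, by rw [map_zero, hp.lapₗ_eq_zero hn]⟩
      · obtain ⟨n, rfl⟩ := Nat.exists_eq_add_of_le' hn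
        refine fischerSpan_le_map_lapₗ (ih (isHomogeneous_lapₗ hp) ?_)
        rwa [← Module.End.mul_apply, ← pow_succ]
    have hharm : p - p' ∈ harmonicSubmodule n := mem_harmonicSubmodule.2
      ⟨hp.sub (fischerSpan_le_homogeneousSubmodule hp'), by rw [map_sub, hlap, sub_self]⟩
    rw [← sub_add_cancel p p']
    exact add_mem (harmonicSubmodule_le_fischerSpan hharm) hp'

end Fischer

/-- `P_s · H_k`. -/
noncomputable def mulHarmonic (s k : ℕ) : Submodule ℝ (MvPolynomial (Fin 2) ℝ) where
  carrier := {p | ∃ p₁ p₂ : MvPolynomial (Fin 2) ℝ, p₁.IsHomogeneous s ∧ p₂.IsHomogeneous s ∧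
    p = p₁ * rePow k + p₂ * imPow k}
  add_mem' := by
    rintro _ _ ⟨a₁, a₂, ha₁, ha₂, rfl⟩ ⟨b₁, b₂, hb₁, hb₂, rfl⟩
    exact ⟨a₁ + b₁, a₂ + b₂, ha₁.add hb₁, ha₂.add hb₂, by ring⟩
  zero_mem' := ⟨0, 0, isHomogeneous_zero _ _ _, isHomogeneous_zero _ _ _, by ring⟩
  smul_mem' := by
    rintro c _ ⟨a₁, a₂, ha₁, ha₂, rfl⟩
    exact ⟨c • a₁, c • a₂, (homogeneousSubmodule (Fin 2) ℝ s).smul_mem c ha₁,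
      (homogeneousSubmodule (Fin 2) ℝ s).smul_mem c ha₂,
      by rw [smul_add, smul_mul_assoc, smul_mul_assoc]⟩

section MulHarmonic

open Submodule

variable {p : MvPolynomial (Fin 2) ℝ} {s k : ℕ}

theorem rSq_pow_mul_mem_mulHarmonic {i j : ℕ} (hi : i ≤ s) (hij : 2 * i + j = s + k) :
    rSq ^ i * rePow j ∈ mulHarmonic s k ∧ rSq ^ i * imPow j ∈ mulHarmonic s k := by
  obtain ⟨m, rfl⟩ := Nat.exists_eq_add_of_le' hi
  obtain ⟨hre_m, him_m⟩ := isHomogeneous_rePow_imPow m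
  obtain ⟨hre_i, him_i⟩ := isHomogeneous_rePow_imPow i
  have hA := (hre_m.mul hre_i).add (him_m.mul him_i)
  have hB := (him_m.mul hre_i).sub (hre_m.mul him_i)
  rw [rSq_pow_mul_rePow, rSq_pow_mul_imPow, show j + i = m + k by omega,
    (rePow_imPow_add m k).1, (rePow_imPow_add m k).2]
  exact ⟨⟨_, _, hA, hB.neg, by ring⟩, ⟨_, _, hB, hA, by ring⟩⟩

theorem fischerSpan_le_mulHarmonic (s k : ℕ) : fischerSpan s (s + k) ≤ mulHarmonic s k := by
  rw [fischerSpan, span_le]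
  rintro _ ⟨i, j, hi, hij, h, hh, rfl⟩
  rw [harmonicSubmodule_eq_span] at hh
  obtain ⟨a, b, rfl⟩ := mem_span_pair.1 hh
  obtain ⟨hre, him⟩ := rSq_pow_mul_mem_mulHarmonic hi hij
  rw [SetLike.mem_coe, mul_add, mul_smul_comm, mul_smul_comm]
  exact add_mem (smul_mem _ a hre) (smul_mem _ b him)

theorem mem_mulHarmonic_iff :
    p ∈ mulHarmonic s k ↔ p.IsHomogeneous (s + k) ∧ (lapₗ ^ (s + 1)) p = 0 := by
  refine ⟨?_, fun ⟨hp, hker⟩ =>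
    fischerSpan_le_mulHarmonic s k (mem_fischerSpan_of_lapₗ_pow_eq_zero hp hker)⟩
  rintro ⟨p₁, p₂, h₁, h₂, rfl⟩
  obtain ⟨hre, him⟩ := isHomogeneous_rePow_imPow k
  refine ⟨(h₁.mul hre).add (h₂.mul him), ?_⟩
  rw [map_add, lapₗ_pow_mul_eq_zero h₁ (lapₗ_rePow k), lapₗ_pow_mul_eq_zero h₂ (lapₗ_imPow k),
    add_zero]

end MulHarmonic

theorem PsHk_description_general
    (f g : ℕ → MvPolynomial (Fin 2) ℝ)
    (hf : ∀ (n : ℕ) (x y : ℝ), eval ![x, y] (f n) = (((x : ℂ) + y * Complex.I) ^ n).re)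
    (hg : ∀ (n : ℕ) (x y : ℝ), eval ![x, y] (g n) = (((x : ℂ) + y * Complex.I) ^ n).im)
    (k s : ℕ) :
    (s < k - 1 →
      ∀ p : MvPolynomial (Fin 2) ℝ,
        (∃ p₁ p₂ : MvPolynomial (Fin 2) ℝ, p₁.IsHomogeneous s ∧ p₂.IsHomogeneous s ∧
            p = p₁ * f k + p₂ * g k)
          ↔ (p.IsHomogeneous (s + k) ∧ pLap^[s + 1] p = 0)) ∧
    (k - 1 ≤ s →
      ∀ p : MvPolynomial (Fin 2) ℝ,
        (∃ p₁ p₂ : MvPolynomial (Fin 2) ℝ, p₁.IsHomogeneous s ∧ p₂.IsHomogeneous s ∧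
            p = p₁ * f k + p₂ * g k)
          ↔ p.IsHomogeneous (s + k)) := by
  obtain rfl : f = rePow := funext fun n => funext_fin_two fun x y => by rw [hf, eval_rePow]
  obtain rfl : g = imPow := funext fun n => funext_fin_two fun x y => by rw [hg, eval_imPow]
  refine ⟨fun _ p => ?_, fun hks p => ?_⟩
  · rw [← coe_lapₗ_pow]
    exact mem_mulHarmonic_iff
  · exact mem_mulHarmonic_iff.trans
      ⟨And.left, fun hp => ⟨hp, hp.lapₗ_pow_eq_zero (by omega)⟩⟩

/-- Let `k ≥ 1` and `s ≥ 0`. If `s < k−1` then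
`P_s·H_k = {p ∈ P_{s+k} : Δ^{s+1} p = 0}`; if `s ≥ k−1` then `P_s·H_k = P_{s+k}`.
Here `f n = Re((x+iy)^n)`, `g n = Im((x+iy)^n)`, and an element of `P_s·H_k` is a polynomial
of the form `p₁·f k + p₂·g k` with `p₁, p₂` homogeneous of degree `s`. -/
theorem PsHk_description
    (f g : ℕ → MvPolynomial (Fin 2) ℝ)
    (hf : ∀ (n : ℕ) (x y : ℝ), eval ![x, y] (f n) = (((x : ℂ) + y * Complex.I) ^ n).re)
    (hg : ∀ (n : ℕ) (x y : ℝ), eval ![x, y] (g n) = (((x : ℂ) + y * Complex.I) ^ n).im)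
    (k s : ℕ) (hk : 1 ≤ k) :
    (s < k - 1 →
      ∀ p : MvPolynomial (Fin 2) ℝ,
        (∃ p₁ p₂ : MvPolynomial (Fin 2) ℝ, p₁.IsHomogeneous s ∧ p₂.IsHomogeneous s ∧
            p = p₁ * f k + p₂ * g k)
          ↔ (p.IsHomogeneous (s + k) ∧ pLap^[s + 1] p = 0)) ∧
    (k - 1 ≤ s →
      ∀ p : MvPolynomial (Fin 2) ℝ,
        (∃ p₁ p₂ : MvPolynomial (Fin 2) ℝ, p₁.IsHomogeneous s ∧ p₂.IsHomogeneous s ∧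
            p = p₁ * f k + p₂ * g k)
          ↔ p.IsHomogeneous (s + k)) :=
  PsHk_description_general f g hf hg k s
end

section
/- Let k ≥ 1 and let u, v ∈ m₂ be smooth function-germs (ℝ²,0) → (ℝ,0). Identify ℝ² with ℂ via z = x + iy, and define φ : (ℝ²,0) → (ℝ²,0) by φ(z) = z·(1 + u(z) − i·v(z))^{1/k}, using the k-th root branch with value 1 at 1 (this is well defined near 0 since u(0) = v(0) = 0, and φ is a diffeomorphism-germ at 0). Then f_k ∘ φ = f_k + u·f_k + v·g_k as germs at 0. -/
open Filter Topology

/-- The function `f_k = Re((x+iy)^k)` on `ℝ²`. -/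
noncomputable def fkFun (k : ℕ) : ℝ × ℝ → ℝ :=
  fun p => (((p.1 : ℂ) + p.2 * Complex.I) ^ k).re

/-- The function `g_k = Im((x+iy)^k)` on `ℝ²`. -/
noncomputable def gkFun (k : ℕ) : ℝ × ℝ → ℝ :=
  fun p => (((p.1 : ℂ) + p.2 * Complex.I) ^ k).im

/-- The map `φ(z) = z·(1 + u(z) − i·v(z))^{1/k}` on `ℝ² ≃ ℂ`, where the `k`-th root branch
with value `1` at `1` is `w ↦ exp(log w / k)` with the principal logarithm. -/
noncomputable def rootShear (k : ℕ) (u v : ℝ × ℝ → ℝ) : ℝ × ℝ → ℝ × ℝ :=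
  fun p =>
    ((((p.1 : ℂ) + p.2 * Complex.I) *
        Complex.exp (Complex.log (1 + u p - v p * Complex.I) / (k : ℂ))).re,
     (((p.1 : ℂ) + p.2 * Complex.I) *
        Complex.exp (Complex.log (1 + u p - v p * Complex.I) / (k : ℂ))).im)

/-- For `k ≥ 1` and smooth germs `u, v ∈ m₂`, the map
`φ(z) = z·(1 + u − i·v)^{1/k}` is a diffeomorphism-germ at `0 ∈ ℝ²` and
`f_k ∘ φ = f_k + u·f_k + v·g_k` as germs at `0`. -/
theorem root_scaling_realizes_multiplication
    (k : ℕ) (hk : 1 ≤ k)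
    (u v : ℝ × ℝ → ℝ)
    (hu : ContDiffAt ℝ (⊤ : ℕ∞) u 0) (hu0 : u 0 = 0)
    (hv : ContDiffAt ℝ (⊤ : ℕ∞) v 0) (hv0 : v 0 = 0) :
    (∃ ψ : ℝ × ℝ → ℝ × ℝ,
      ContDiffAt ℝ (⊤ : ℕ∞) (rootShear k u v) 0 ∧ ContDiffAt ℝ (⊤ : ℕ∞) ψ 0 ∧
      rootShear k u v 0 = 0 ∧ ψ 0 = 0 ∧
      (ψ ∘ rootShear k u v =ᶠ[nhds 0] id) ∧ (rootShear k u v ∘ ψ =ᶠ[nhds 0] id)) ∧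
    (fkFun k ∘ rootShear k u v =ᶠ[nhds 0]
      fun p => fkFun k p + u p * fkFun k p + v p * gkFun k p) := by
  classical
  have hkC : (k : ℂ) ≠ 0 := Nat.cast_ne_zero.2 (by omega)
  -- notation
  set z : ℝ × ℝ → ℂ := fun p => (p.1 : ℂ) + p.2 * Complex.I with hzdef
  set w : ℝ × ℝ → ℂ := fun p => 1 + u p - v p * Complex.I with hwdef
  set c : ℝ × ℝ → ℂ := fun p => Complex.exp (Complex.log (w p) / (k : ℂ)) with hcdef
  set Φ : ℝ × ℝ → ℂ := fun p => z p * c p with hΦdef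
  have hz0 : z 0 = 0 := by simp [hzdef]
  have hw0 : w 0 = 1 := by simp [hwdef, hu0, hv0]
  have hc0 : c 0 = 1 := by simp [hcdef, hw0]
  -- smoothness
  have huC : ContDiffAt ℝ (⊤ : ℕ∞) (fun p => (u p : ℂ)) 0 :=
    Complex.ofRealCLM.contDiff.contDiffAt.comp 0 hu
  have hvC : ContDiffAt ℝ (⊤ : ℕ∞) (fun p => (v p : ℂ)) 0 :=
    Complex.ofRealCLM.contDiff.contDiffAt.comp 0 hv
  have hw : ContDiffAt ℝ (⊤ : ℕ∞) w 0 :=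
    (contDiffAt_const.add huC).sub (hvC.mul contDiffAt_const)
  have hlog : ContDiffAt ℝ (⊤ : ℕ∞) (fun p => Complex.log (w p)) 0 := by
    have h1 : ContDiffAt ℂ (⊤ : ℕ∞) Complex.log (w 0) := by
      rw [hw0]; exact Complex.contDiffAt_log Complex.one_mem_slitPlane
    exact (h1.restrict_scalars ℝ).comp 0 hw
  have hc : ContDiffAt ℝ (⊤ : ℕ∞) c 0 := by
    have h1 : ContDiffAt ℝ (⊤ : ℕ∞) Complex.exp (Complex.log (w 0) / k) :=
      ((Complex.contDiff_exp (𝕜 := ℂ)).restrict_scalars ℝ).contDiffAt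
    exact h1.comp 0 (hlog.div_const _)
  have hzsmooth : ContDiff ℝ (⊤ : ℕ∞) z := by
    apply ContDiff.add
    · exact Complex.ofRealCLM.contDiff.comp contDiff_fst
    · exact (Complex.ofRealCLM.contDiff.comp contDiff_snd).mul contDiff_const
  have hΦ : ContDiffAt ℝ (⊤ : ℕ∞) Φ 0 := (hzsmooth.contDiffAt).mul hc
  have hφ : ContDiffAt ℝ (⊤ : ℕ∞) (rootShear k u v) 0 :=
    (Complex.reCLM.contDiff.contDiffAt.comp 0 hΦ).prodMk
      (Complex.imCLM.contDiff.contDiffAt.comp 0 hΦ)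
  -- the derivative of `z` is the linear equiv `ℝ × ℝ ≃ ℂ`
  have hzeq : z = ⇑Complex.equivRealProdCLM.symm := by
    funext p; rw [Complex.equivRealProdCLM_symm_apply]
  have hz' : HasFDerivAt z (Complex.equivRealProdCLM.symm : (ℝ × ℝ) →L[ℝ] ℂ) 0 := by
    rw [hzeq]; exact Complex.equivRealProdCLM.symm.hasFDerivAt
  have hcd : HasFDerivAt c (fderiv ℝ c 0) 0 := (hc.differentiableAt (by simp)).hasFDerivAt
  have hΦ' : HasFDerivAt Φ (Complex.equivRealProdCLM.symm : (ℝ × ℝ) →L[ℝ] ℂ) 0 := by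
    have h := hz'.mul hcd
    rw [hz0, hc0] at h
    rw [one_smul] at h
    have e : ((0 : ℂ) • fderiv ℝ c 0 + (Complex.equivRealProdCLM.symm : (ℝ × ℝ) →L[ℝ] ℂ))
        = (Complex.equivRealProdCLM.symm : (ℝ × ℝ) →L[ℝ] ℂ) := by
      ext
      · simp
      · simp
    rw [e] at h
    exact h
  set E : (ℝ × ℝ) ≃L[ℝ] (ℝ × ℝ) :=
    Complex.equivRealProdCLM.symm.trans Complex.equivRealProdCLM with hEdef
  have hφ' : HasFDerivAt (rootShear k u v) (E : (ℝ × ℝ) →L[ℝ] (ℝ × ℝ)) 0 := by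
    have hcomp :=
      (Complex.equivRealProdCLM.toContinuousLinearMap.hasFDerivAt
        (x := Φ 0)).comp 0 hΦ'
    have : rootShear k u v = ⇑Complex.equivRealProdCLM ∘ Φ := by
      funext p; rfl
    rw [this]
    exact hcomp
  have hφ0 : rootShear k u v 0 = 0 := by
    show (((Φ 0).re : ℝ), (Φ 0).im) = (0 : ℝ × ℝ)
    have : Φ 0 = 0 := by rw [hΦdef]; simp [hz0]
    rw [this]; simp
  have hs : HasStrictFDerivAt (rootShear k u v) (E : (ℝ × ℝ) →L[ℝ] (ℝ × ℝ)) 0 :=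
    hφ.hasStrictFDerivAt' hφ' (by simp)
  constructor
  · refine ⟨hs.localInverse (rootShear k u v) E 0, hφ, ?_, hφ0, ?_, ?_, ?_⟩
    · have := hφ.to_localInverse (f' := E) hφ' (by simp)
      rw [hφ0] at this
      exact this
    · have := hs.localInverse_apply_image
      rw [hφ0] at this
      exact this
    · exact hs.eventually_left_inverse.mono fun x hx => hx
    · have := hs.eventually_right_inverse
      rw [hφ0] at this
      exact this.mono fun y hy => hy
  · -- the functional equation
    have hne : ∀ᶠ p in 𝓝 (0 : ℝ × ℝ), w p ≠ 0 := by
      have h1 : ∀ᶠ x in 𝓝 (w 0), x ≠ (0 : ℂ) := by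
        rw [hw0]; exact eventually_ne_nhds one_ne_zero
      exact hw.continuousAt.eventually h1
    filter_upwards [hne] with p hp
    show fkFun k (rootShear k u v p) = _
    have key : ((rootShear k u v p).1 : ℂ) + (rootShear k u v p).2 * Complex.I = Φ p := by
      show ((Φ p).re : ℂ) + (Φ p).im * Complex.I = Φ p
      exact Complex.re_add_im _
    have hck : c p ^ k = w p := by
      rw [hcdef]
      rw [← Complex.exp_nat_mul]
      have : (k : ℂ) * (Complex.log (w p) / k) = Complex.log (w p) := by
        field_simp
      rw [this, Complex.exp_log hp]
    have hΦk : Φ p ^ k = z p ^ k * w p := by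
      rw [hΦdef, mul_pow, hck]
    simp only [fkFun, gkFun]
    rw [key, hΦk, hwdef]
    simp only [Complex.mul_re, Complex.sub_re, Complex.add_re, Complex.one_re,
      Complex.ofReal_re, Complex.mul_im, Complex.sub_im, Complex.add_im, Complex.one_im,
      Complex.ofReal_im, Complex.I_re, Complex.I_im]
    ring
end
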